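/- Let A be an m×n complex matrix of rank r with singular value decomposition A = U₁Σ₁V₁*, and B an m×n complex matrix of rank s with singular value decomposition B = Ũ₁Σ̃₁Ṽ₁*, and let E = B − A. Then ‖B† − A†‖_F² = ‖Ũ₂*U₁Σ₁⁻¹‖_F² + ‖Σ̃₁⁻¹Ṽ₁*V₂‖_F² + ‖A†EB†‖_F². -/

import Mathlib

open Matrix

/-- The square of the Frobenius norm of a complex matrix. -/
noncomputable def frobSq {α β : Type*} [Fintype α] [Fintype β] (M : Matrix α β ℂ) : ℝ :=
  ∑ i, ∑ j, ‖M i j‖ ^ 2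

/-- The spectral norm (ℓ²-operator norm) of a complex matrix. -/
noncomputable def spec {α β : Type*} [Fintype α] [Fintype β] [DecidableEq β]
    (M : Matrix α β ℂ) : ℝ :=
  ‖LinearMap.toContinuousLinearMap (Matrix.toEuclideanLin M)‖

/-- `X` is the Moore–Penrose inverse of `M` (the four Penrose equations). -/
def IsMoorePenrose {α β : Type*} [Fintype α] [Fintype β]
    (M : Matrix α β ℂ) (X : Matrix β α ℂ) : Prop :=
  M * X * M = M ∧ X * M * X = X ∧ (M * X)ᴴ = M * X ∧ (X * M)ᴴ = X * M

/-!
Put `D = B† - A†` in the bases `V = (V₁, V₂)` and `Ũ = (Ũ₁, Ũ₂)`: by unitary invariance its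
Frobenius norm is the sum of those of the four blocks `Vᵢᴴ D Ũⱼ`. From `A† A A† = A†` with
`A† A = V₁ V₁ᴴ`, and `B† B B† = B†` with `B B† = Ũ₁ Ũ₁ᴴ`, we get `V₂ᴴ A† = 0` and `B† Ũ₂ = 0`, so
`V₂ᴴ D Ũ₂ = 0`, `V₁ᴴ D Ũ₂ = -Σ₁⁻¹ U₁ᴴ Ũ₂` and `V₂ᴴ D Ũ₁ = V₂ᴴ Ṽ₁ Σ̃₁⁻¹`. The identity
`A† (B - A) B† = -(A† A) (B† - A†) (B B†)` shows that `A† E B† = -V₁ (V₁ᴴ D Ũ₁) Ũ₁ᴴ`, which has the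
Frobenius norm of the remaining block.
-/

lemma conjTranspose_fromCols_mul_fromCols_eq_one_iff {R α β γ : Type*} [Semiring R] [Star R]
    [Fintype α] [Fintype β] [DecidableEq β] [Fintype γ] [DecidableEq γ]
    {W₁ : Matrix α β R} {W₂ : Matrix α γ R} :
    (fromCols W₁ W₂)ᴴ * fromCols W₁ W₂ = 1 ↔
      W₁ᴴ * W₁ = 1 ∧ W₁ᴴ * W₂ = 0 ∧ W₂ᴴ * W₁ = 0 ∧ W₂ᴴ * W₂ = 1 := by
  rw [conjTranspose_fromCols_eq_fromRows_conjTranspose, fromRows_mul_fromCols, ← fromBlocks_one,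
    fromBlocks_inj]

lemma mul_mul_eq_of_mul_eq_one {R α β γ : Type*} [Semiring R] [Fintype α] [DecidableEq α]
    [Fintype β] {P : Matrix α β R} {Q : Matrix β α R} (h : P * Q = 1) (M : Matrix α γ R) :
    P * (Q * M) = M := by
  rw [← Matrix.mul_assoc, h, Matrix.one_mul]

lemma svd_pinv_mul_svd {R α β ρ : Type*} [Semiring R] [Star R] [Fintype α] [Fintype β]
    [Fintype ρ] [DecidableEq ρ] {U : Matrix α ρ R} {V : Matrix β ρ R} {D D' : Matrix ρ ρ R}
    (hU : Uᴴ * U = 1) (hD : D' * D = 1) :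
    V * D' * Uᴴ * (U * D * Vᴴ) = V * Vᴴ := by
  simp only [Matrix.mul_assoc, mul_mul_eq_of_mul_eq_one hU, mul_mul_eq_of_mul_eq_one hD]

lemma mul_sub_mul_eq_neg_mul_mul {R α β : Type*} [Ring R] [Fintype α] [Fintype β]
    {A B : Matrix α β R} {A' B' : Matrix β α R} (hA : A' * A * A' = A') (hB : B' * B * B' = B') :
    A' * (B - A) * B' = -(A' * A * (B' - A') * (B * B')) := by
  simp only [Matrix.mul_sub, Matrix.sub_mul, ← Matrix.mul_assoc]
  rw [Matrix.mul_assoc (A' * A) B' B, Matrix.mul_assoc (A' * A) (B' * B) B', hB, hA, neg_sub]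

section Frobenius

variable {α β γ δ : Type*} [Fintype α] [Fintype β] [Fintype γ] [Fintype δ]

lemma frobSq_eq_re_trace (M : Matrix α β ℂ) : frobSq M = (Mᴴ * M).trace.re := by
  simp only [frobSq, trace, diag, mul_apply, conjTranspose_apply, Complex.re_sum]
  rw [Finset.sum_comm]
  simp [Complex.conj_mul', ← Complex.ofReal_pow]

lemma frobSq_conjTranspose (M : Matrix α β ℂ) : frobSq Mᴴ = frobSq M := by
  simp only [frobSq, conjTranspose_apply, norm_star]
  exact Finset.sum_comm

@[simp] lemma frobSq_neg (M : Matrix α β ℂ) : frobSq (-M) = frobSq M := by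
  simp [frobSq]

@[simp] lemma frobSq_zero : frobSq (0 : Matrix α β ℂ) = 0 := by
  simp [frobSq]

lemma frobSq_fromBlocks (P : Matrix α γ ℂ) (Q : Matrix α δ ℂ) (R : Matrix β γ ℂ)
    (S : Matrix β δ ℂ) :
    frobSq (fromBlocks P Q R S) = frobSq P + frobSq Q + frobSq R + frobSq S := by
  simp only [frobSq, Fintype.sum_sum_type, fromBlocks_apply₁₁, fromBlocks_apply₁₂,
    fromBlocks_apply₂₁, fromBlocks_apply₂₂, Finset.sum_add_distrib]
  ring

lemma frobSq_isometry_mul [DecidableEq β] {W : Matrix α β ℂ} (hW : Wᴴ * W = 1)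
    (M : Matrix β γ ℂ) : frobSq (W * M) = frobSq M := by
  rw [frobSq_eq_re_trace, frobSq_eq_re_trace, conjTranspose_mul, Matrix.mul_assoc,
    ← Matrix.mul_assoc Wᴴ, hW, Matrix.one_mul]

lemma frobSq_mul_coisometry [DecidableEq β] {W : Matrix β α ℂ} (hW : W * Wᴴ = 1)
    (M : Matrix γ β ℂ) : frobSq (M * W) = frobSq M := by
  rw [← frobSq_conjTranspose, conjTranspose_mul, frobSq_isometry_mul (by simpa using hW),
    frobSq_conjTranspose]

lemma frobSq_eq_sum_blocks {ι ν : Type*} [Fintype ι] [Fintype ν] [DecidableEq α] [DecidableEq β]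
    {V₁ : Matrix α γ ℂ} {V₂ : Matrix α δ ℂ} (hV : fromCols V₁ V₂ * (fromCols V₁ V₂)ᴴ = 1)
    {W₁ : Matrix β ι ℂ} {W₂ : Matrix β ν ℂ} (hW : fromCols W₁ W₂ * (fromCols W₁ W₂)ᴴ = 1)
    (M : Matrix α β ℂ) :
    frobSq M = frobSq (V₁ᴴ * M * W₁) + frobSq (V₁ᴴ * M * W₂)
      + frobSq (V₂ᴴ * M * W₁) + frobSq (V₂ᴴ * M * W₂) := by
  have hV' : (fromCols V₁ V₂)ᴴᴴ * (fromCols V₁ V₂)ᴴ = 1 := by rwa [conjTranspose_conjTranspose]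
  rw [← frobSq_mul_coisometry hW, ← frobSq_isometry_mul hV', ← Matrix.mul_assoc,
    conjTranspose_fromCols_eq_fromRows_conjTranspose, fromRows_mul, fromRows_mul_fromCols,
    frobSq_fromBlocks]

end Frobenius

lemma frobSq_pinv_sub_pinv {α β γ δ ι ν : Type*} [Fintype α] [DecidableEq α] [Fintype β]
    [DecidableEq β] [Fintype γ] [DecidableEq γ] [Fintype δ] [DecidableEq δ] [Fintype ι]
    [DecidableEq ι] [Fintype ν] [DecidableEq ν]
    {V₁ : Matrix β γ ℂ} {V₂ : Matrix β δ ℂ} {W₁ : Matrix α ι ℂ} {W₂ : Matrix α ν ℂ}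
    (hV : (fromCols V₁ V₂)ᴴ * fromCols V₁ V₂ = 1) (hV' : fromCols V₁ V₂ * (fromCols V₁ V₂)ᴴ = 1)
    (hW : (fromCols W₁ W₂)ᴴ * fromCols W₁ W₂ = 1) (hW' : fromCols W₁ W₂ * (fromCols W₁ W₂)ᴴ = 1)
    {A B : Matrix α β ℂ} {A' B' : Matrix β α ℂ} (hA : A' * A * A' = A') (hB : B' * B * B' = B')
    (hA'A : A' * A = V₁ * V₁ᴴ) (hBB' : B * B' = W₁ * W₁ᴴ) :
    frobSq (B' - A') = frobSq (V₁ᴴ * A' * W₂) + frobSq (V₂ᴴ * B' * W₁)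
      + frobSq (A' * (B - A) * B') := by
  obtain ⟨hV₁, -, hV₂₁, -⟩ := conjTranspose_fromCols_mul_fromCols_eq_one_iff.mp hV
  obtain ⟨hW₁, hW₁₂, -⟩ := conjTranspose_fromCols_mul_fromCols_eq_one_iff.mp hW
  have hV₂A' : V₂ᴴ * A' = 0 := by
    rw [← hA, hA'A, ← Matrix.mul_assoc, ← Matrix.mul_assoc, hV₂₁, Matrix.zero_mul, Matrix.zero_mul]
  have hB'W₂ : B' * W₂ = 0 := by
    rw [← hB, Matrix.mul_assoc B', hBB', Matrix.mul_assoc, Matrix.mul_assoc, hW₁₂, Matrix.mul_zero,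
      Matrix.mul_zero]
  have h₁₁ : frobSq (V₁ᴴ * (B' - A') * W₁) = frobSq (A' * (B - A) * B') := by
    rw [mul_sub_mul_eq_neg_mul_mul hA hB, hA'A, hBB', frobSq_neg,
      show V₁ * V₁ᴴ * (B' - A') * (W₁ * W₁ᴴ) = V₁ * (V₁ᴴ * (B' - A') * W₁) * W₁ᴴ by
        simp only [Matrix.mul_assoc],
      frobSq_mul_coisometry (W := W₁ᴴ) (by rwa [conjTranspose_conjTranspose]),
      frobSq_isometry_mul hV₁]
  rw [frobSq_eq_sum_blocks hV' hW' (B' - A'), h₁₁]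
  simp only [Matrix.mul_sub, Matrix.sub_mul, Matrix.mul_assoc _ B' W₂, hB'W₂, hV₂A',
    Matrix.mul_zero, sub_zero, zero_sub, frobSq_neg, frobSq_zero, add_zero]
  ring

theorem stmt16_general {m n r s : ℕ}
    (A B : Matrix (Fin m) (Fin n) ℂ)
    (σ : Fin r → ℝ) (hσpos : ∀ i, 0 < σ i)
    (τ : Fin s → ℝ) (hτpos : ∀ i, 0 < τ i)
    (U₁ : Matrix (Fin m) (Fin r) ℂ) (U₂ : Matrix (Fin m) (Fin (m - r)) ℂ)
    (V₁ : Matrix (Fin n) (Fin r) ℂ) (V₂ : Matrix (Fin n) (Fin (n - r)) ℂ)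
    (tU₁ : Matrix (Fin m) (Fin s) ℂ) (tU₂ : Matrix (Fin m) (Fin (m - s)) ℂ)
    (tV₁ : Matrix (Fin n) (Fin s) ℂ) (tV₂ : Matrix (Fin n) (Fin (n - s)) ℂ)
    (hU : (fromCols U₁ U₂)ᴴ * fromCols U₁ U₂ = 1
        ∧ fromCols U₁ U₂ * (fromCols U₁ U₂)ᴴ = 1)
    (hV : (fromCols V₁ V₂)ᴴ * fromCols V₁ V₂ = 1
        ∧ fromCols V₁ V₂ * (fromCols V₁ V₂)ᴴ = 1)
    (htU : (fromCols tU₁ tU₂)ᴴ * fromCols tU₁ tU₂ = 1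
        ∧ fromCols tU₁ tU₂ * (fromCols tU₁ tU₂)ᴴ = 1)
    (htV : (fromCols tV₁ tV₂)ᴴ * fromCols tV₁ tV₂ = 1
        ∧ fromCols tV₁ tV₂ * (fromCols tV₁ tV₂)ᴴ = 1)
    (hAsvd : A = U₁ * diagonal (fun i => (σ i : ℂ)) * V₁ᴴ)
    (hBsvd : B = tU₁ * diagonal (fun i => (τ i : ℂ)) * tV₁ᴴ)
    (E : Matrix (Fin m) (Fin n) ℂ) (hE : E = B - A)
    (Adag Bdag : Matrix (Fin n) (Fin m) ℂ)
    (hAdag : Adag = V₁ * diagonal (fun i => ((σ i : ℂ))⁻¹) * U₁ᴴ)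
    (hBdag : Bdag = tV₁ * diagonal (fun i => ((τ i : ℂ))⁻¹) * tU₁ᴴ) :
    frobSq (Bdag - Adag)
      = frobSq (tU₂ᴴ * U₁ * diagonal (fun i => ((σ i : ℂ))⁻¹))
        + frobSq (diagonal (fun i => ((τ i : ℂ))⁻¹) * tV₁ᴴ * V₂)
        + frobSq (Adag * E * Bdag) := by
  obtain ⟨hU₁, -⟩ := conjTranspose_fromCols_mul_fromCols_eq_one_iff.mp hU.1
  obtain ⟨hV₁, -⟩ := conjTranspose_fromCols_mul_fromCols_eq_one_iff.mp hV.1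
  obtain ⟨htU₁, -⟩ := conjTranspose_fromCols_mul_fromCols_eq_one_iff.mp htU.1
  obtain ⟨htV₁, -⟩ := conjTranspose_fromCols_mul_fromCols_eq_one_iff.mp htV.1
  have hσ : diagonal (fun i => ((σ i : ℂ))⁻¹) * diagonal (fun i => (σ i : ℂ)) = 1 := by
    simp [diagonal_mul_diagonal, (hσpos _).ne']
  have hτ : diagonal (fun i => (τ i : ℂ)) * diagonal (fun i => ((τ i : ℂ))⁻¹) = 1 := by
    simp [diagonal_mul_diagonal, (hτpos _).ne']
  have hAdagA : Adag * A = V₁ * V₁ᴴ := by rw [hAdag, hAsvd, svd_pinv_mul_svd hU₁ hσ]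
  have hBBdag : B * Bdag = tU₁ * tU₁ᴴ := by rw [hBdag, hBsvd, svd_pinv_mul_svd htV₁ hτ]
  have hAdagAAdag : Adag * A * Adag = Adag := by
    rw [hAdagA, hAdag]
    simp only [Matrix.mul_assoc, mul_mul_eq_of_mul_eq_one hV₁]
  have hBdagBBdag : Bdag * B * Bdag = Bdag := by
    rw [Matrix.mul_assoc, hBBdag, hBdag]
    simp only [Matrix.mul_assoc, mul_mul_eq_of_mul_eq_one htU₁]
  rw [frobSq_pinv_sub_pinv hV.1 hV.2 htU.1 htU.2 hAdagAAdag hBdagBBdag hAdagA hBBdag, ← hE,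
    hAdag, hBdag, ← frobSq_conjTranspose (V₁ᴴ * _ * tU₂), ← frobSq_conjTranspose (V₂ᴴ * _ * tU₁)]
  simp only [Matrix.mul_assoc, mul_mul_eq_of_mul_eq_one hV₁, mul_mul_eq_of_mul_eq_one htU₁,
    conjTranspose_mul, conjTranspose_conjTranspose, diagonal_conjTranspose, Pi.star_def, star_inv₀,
    RCLike.star_def, Complex.conj_ofReal]

theorem stmt16 {m n r s : ℕ}
    (A B : Matrix (Fin m) (Fin n) ℂ)
    (hrankA : A.rank = r) (hrankB : B.rank = s)
    (σ : Fin r → ℝ) (hσmono : Antitone σ) (hσpos : ∀ i, 0 < σ i)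
    (τ : Fin s → ℝ) (hτmono : Antitone τ) (hτpos : ∀ i, 0 < τ i)
    (U₁ : Matrix (Fin m) (Fin r) ℂ) (U₂ : Matrix (Fin m) (Fin (m - r)) ℂ)
    (V₁ : Matrix (Fin n) (Fin r) ℂ) (V₂ : Matrix (Fin n) (Fin (n - r)) ℂ)
    (tU₁ : Matrix (Fin m) (Fin s) ℂ) (tU₂ : Matrix (Fin m) (Fin (m - s)) ℂ)
    (tV₁ : Matrix (Fin n) (Fin s) ℂ) (tV₂ : Matrix (Fin n) (Fin (n - s)) ℂ)
    (hU : (fromCols U₁ U₂)ᴴ * fromCols U₁ U₂ = 1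
        ∧ fromCols U₁ U₂ * (fromCols U₁ U₂)ᴴ = 1)
    (hV : (fromCols V₁ V₂)ᴴ * fromCols V₁ V₂ = 1
        ∧ fromCols V₁ V₂ * (fromCols V₁ V₂)ᴴ = 1)
    (htU : (fromCols tU₁ tU₂)ᴴ * fromCols tU₁ tU₂ = 1
        ∧ fromCols tU₁ tU₂ * (fromCols tU₁ tU₂)ᴴ = 1)
    (htV : (fromCols tV₁ tV₂)ᴴ * fromCols tV₁ tV₂ = 1
        ∧ fromCols tV₁ tV₂ * (fromCols tV₁ tV₂)ᴴ = 1)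
    (hAsvd : A = U₁ * diagonal (fun i => (σ i : ℂ)) * V₁ᴴ)
    (hBsvd : B = tU₁ * diagonal (fun i => (τ i : ℂ)) * tV₁ᴴ)
    (E : Matrix (Fin m) (Fin n) ℂ) (hE : E = B - A)
    (Adag Bdag : Matrix (Fin n) (Fin m) ℂ)
    (hAdag : Adag = V₁ * diagonal (fun i => ((σ i : ℂ))⁻¹) * U₁ᴴ)
    (hBdag : Bdag = tV₁ * diagonal (fun i => ((τ i : ℂ))⁻¹) * tU₁ᴴ) :
    frobSq (Bdag - Adag)
      = frobSq (tU₂ᴴ * U₁ * diagonal (fun i => ((σ i : ℂ))⁻¹))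
        + frobSq (diagonal (fun i => ((τ i : ℂ))⁻¹) * tV₁ᴴ * V₂)
        + frobSq (Adag * E * Bdag) :=
  stmt16_general A B σ hσpos τ hτpos U₁ U₂ V₁ V₂ tU₁ tU₂ tV₁ tV₂ hU hV htU htV hAsvd hBsvd E hE Adag
    Bdag hAdag hBdag
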